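/- (Grötzsch's inequality for rectangles) Let R = [0,a]×[0,b] and R' = [0,a']×[0,b'] be rectangles, and let f : R → R' be a continuously differentiable bijection mapping the sides {x=0},{x=a},{y=0},{y=b} onto the corresponding sides {x=0},{x=a'},{y=0},{y=b'} respectively. If the dilatation quotient of f is at most K everywhere, then (a'/b')/(a/b) ≤ K. -/

import Mathlib

/-!
Length–area argument. Let `g = ‖∂f/∂x‖`. Each horizontal segment of `R` is mapped onto a curve
joining the two vertical sides of `R'`, so `∫₀ᵃ g(x + iy) dx ≥ a'` and hence `∫_R g ≥ a'b`.
By Cauchy–Schwarz `(a'b)² ≤ ab ∫_R g²`. In the plane `‖D‖ ≤ |det D| ‖D⁻¹‖`, so pointwise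
`g² ≤ ‖Df‖² ≤ K |det Df|`, and `∫_R |det Df| = area f(R) = a'b'` by the change of variables
formula. Altogether `(a'b)² ≤ ab K a'b'`.
-/

open Complex ComplexConjugate MeasureTheory Set

namespace ContinuousLinearMap

lemma det_eq_re_im (T : ℂ →L[ℝ] ℂ) :
    T.det = (T 1).re * (T I).im - (T I).re * (T 1).im := by
  rw [det, ← LinearMap.det_toMatrix basisOneI, Matrix.det_fin_two]
  simp [LinearMap.toMatrix_apply]

lemma apply_eq_re_smul_add_im_smul (T : ℂ →L[ℝ] ℂ) (w : ℂ) :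
    T w = w.re • T 1 + w.im • T I := by
  conv_lhs => rw [← re_add_im w]
  rw [← mul_one (w.re : ℂ), ← real_smul, ← real_smul, map_add, map_smul, map_smul]

lemma im_conj_apply_mul_apply (T : ℂ →L[ℝ] ℂ) (u v : ℂ) :
    (conj (T u) * T v).im = T.det * (conj u * v).im := by
  rw [apply_eq_re_smul_add_im_smul T u, apply_eq_re_smul_add_im_smul T v, det_eq_re_im]
  simp only [mul_im, conj_re, conj_im, add_re, add_im, smul_re, smul_im, smul_eq_mul]
  ring

end ContinuousLinearMap

namespace ContinuousLinearEquiv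

lemma opNorm_le_abs_det_mul_opNorm_symm (D : ℂ ≃L[ℝ] ℂ) :
    ‖(D : ℂ →L[ℝ] ℂ)‖ ≤ |(D : ℂ →L[ℝ] ℂ).det| * ‖(D.symm : ℂ →L[ℝ] ℂ)‖ := by
  set T : ℂ →L[ℝ] ℂ := (D : ℂ →L[ℝ] ℂ)
  set S : ℂ →L[ℝ] ℂ := (D.symm : ℂ →L[ℝ] ℂ)
  refine T.opNorm_le_bound (by positivity) fun z => ?_
  rcases (norm_nonneg (T z)).eq_or_lt with hw | hw
  · rw [← hw]; positivity
  -- `z` and `u` span the area `‖T z‖² / det T`, since `T u` is `T z` turned by a right angle.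
  set u := S (I * T z)
  have harea : ‖T z‖ ^ 2 = T.det * (conj z * u).im := by
    rw [← T.im_conj_apply_mul_apply, show T u = I * T z from D.apply_symm_apply _,
      mul_left_comm, conj_mul', I_mul_im, ← ofReal_pow, ofReal_re]
  have hu : ‖u‖ ≤ ‖S‖ * ‖T z‖ := by simpa using S.le_opNorm (I * T z)
  have : ‖T z‖ ^ 2 ≤ |T.det| * ‖S‖ * ‖z‖ * ‖T z‖ :=
    calc ‖T z‖ ^ 2 ≤ |T.det| * |(conj z * u).im| := by
          rw [harea, ← abs_mul]; exact le_abs_self _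
      _ ≤ |T.det| * (‖z‖ * ‖u‖) := by
          gcongr; simpa [norm_mul] using abs_im_le_norm (conj z * u)
      _ ≤ |T.det| * (‖z‖ * (‖S‖ * ‖T z‖)) := by gcongr
      _ = |T.det| * ‖S‖ * ‖z‖ * ‖T z‖ := by ring
  nlinarith

lemma sq_norm_apply_le (D : ℂ ≃L[ℝ] ℂ) (v : ℂ) :
    ‖D v‖ ^ 2 ≤
      ‖(D : ℂ →L[ℝ] ℂ)‖ * ‖(D.symm : ℂ →L[ℝ] ℂ)‖ * |(D : ℂ →L[ℝ] ℂ).det| * ‖v‖ ^ 2 :=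
  calc ‖D v‖ ^ 2 ≤ (‖(D : ℂ →L[ℝ] ℂ)‖ * ‖v‖) ^ 2 := by
        gcongr; exact (D : ℂ →L[ℝ] ℂ).le_opNorm v
    _ ≤ ‖(D : ℂ →L[ℝ] ℂ)‖ * (|(D : ℂ →L[ℝ] ℂ).det| * ‖(D.symm : ℂ →L[ℝ] ℂ)‖) * ‖v‖ ^ 2 := by
        rw [mul_pow, sq]; gcongr; exact D.opNorm_le_abs_det_mul_opNorm_symm
    _ = _ := by ring

end ContinuousLinearEquiv

namespace Complex

lemma volume_reProdIm (s t : Set ℝ) : volume (s ×ℂ t) = volume s * volume t := by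
  rw [show s ×ℂ t = measurableEquivRealProd ⁻¹' (s ×ˢ t) from rfl,
    volume_preserving_equiv_real_prod.measure_preimage_equiv, Measure.volume_eq_prod,
    Measure.prod_prod]

lemma measureReal_reProdIm_Icc {x₀ x₁ y₀ y₁ : ℝ} (hx : x₀ ≤ x₁) (hy : y₀ ≤ y₁) :
    volume.real (Icc x₀ x₁ ×ℂ Icc y₀ y₁) = (x₁ - x₀) * (y₁ - y₀) := by
  simp [measureReal_def, volume_reProdIm, hx, hy]

lemma uniqueDiffOn_reProdIm_Icc {x₀ x₁ y₀ y₁ : ℝ} (hx : x₀ < x₁) (hy : y₀ < y₁) :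
    UniqueDiffOn ℝ (Icc x₀ x₁ ×ℂ Icc y₀ y₁) := by
  refine uniqueDiffOn_convex (((convex_Icc _ _).linear_preimage reLm).inter
    ((convex_Icc _ _).linear_preimage imLm)) ⟨⟨(x₀ + x₁) / 2, (y₀ + y₁) / 2⟩, ?_⟩
  rw [interior_reProdIm, interior_Icc, interior_Icc]
  exact ⟨⟨by linarith, by linarith⟩, by linarith, by linarith⟩

section Fubini

variable {E : Type*} [NormedAddCommGroup E] {s t : Set ℝ} {g : ℂ → E}

lemma integrable_prod_of_integrableOn_reProdIm (hg : IntegrableOn g (s ×ℂ t)) :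
    Integrable (fun p : ℝ × ℝ => g (p.1 + p.2 * I))
      ((volume.restrict s).prod (volume.restrict t)) := by
  rw [Measure.prod_restrict, ← Measure.volume_eq_prod,
    show s ×ˢ t = measurableEquivRealProd.symm ⁻¹' (s ×ℂ t) from rfl]
  simpa [IntegrableOn, Function.comp_def, mk_eq_add_mul_I] using
    (volume_preserving_equiv_real_prod.symm.integrableOn_comp_preimage
      measurableEquivRealProd.symm.measurableEmbedding).2 hg

lemma integrableOn_setIntegral_of_integrableOn_reProdIm [NormedSpace ℝ E]
    (hg : IntegrableOn g (s ×ℂ t)) :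
    IntegrableOn (fun y : ℝ => ∫ x in s, g (x + y * I)) t :=
  (integrable_prod_of_integrableOn_reProdIm hg).integral_prod_right

lemma setIntegral_reProdIm [NormedSpace ℝ E] (hg : IntegrableOn g (s ×ℂ t)) :
    ∫ z in s ×ℂ t, g z = ∫ y in t, ∫ x in s, g (x + y * I) := by
  rw [← volume_preserving_equiv_real_prod.symm.setIntegral_preimage_emb
      measurableEquivRealProd.symm.measurableEmbedding,
    show measurableEquivRealProd.symm ⁻¹' (s ×ℂ t) = s ×ˢ t from rfl, Measure.volume_eq_prod,
    ← Measure.prod_restrict, ← integral_prod_symm _ (integrable_prod_of_integrableOn_reProdIm hg)]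
  simp only [measurableEquivRealProd_symm_apply, mk_eq_add_mul_I]

end Fubini

end Complex

lemma sq_setIntegral_le_measureReal_mul_setIntegral_sq {α : Type*} [MeasurableSpace α]
    {μ : Measure α} {s : Set α} {g : α → ℝ} (hs : μ s ≠ ⊤) (hg : IntegrableOn g s μ)
    (hg2 : IntegrableOn (fun x => g x ^ 2) s μ) :
    (∫ x in s, g x ∂μ) ^ 2 ≤ μ.real s * ∫ x in s, g x ^ 2 ∂μ := by
  rcases eq_or_ne (μ s) 0 with h0 | h0
  · simp [Measure.restrict_eq_zero.2 h0]
  have hpos : 0 < μ.real s := ENNReal.toReal_pos h0 hs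
  have hJensen := even_two.convexOn_pow.map_set_average_le (continuous_pow 2).continuousOn
    isClosed_univ h0 hs (.of_forall fun x => mem_univ (g x)) hg hg2
  rw [setAverage_eq, setAverage_eq, smul_eq_mul, smul_eq_mul, mul_pow] at hJensen
  have := mul_le_mul_of_nonneg_left hJensen (sq_nonneg (μ.real s))
  field_simp at this
  linarith

lemma integral_abs_det_fderiv_eq_measureReal_image {E : Type*} [NormedAddCommGroup E]
    [NormedSpace ℝ E] [FiniteDimensional ℝ E] [MeasurableSpace E] [BorelSpace E]
    (μ : Measure E) [μ.IsAddHaarMeasure] {s : Set E} {f : E → E} {f' : E → E →L[ℝ] E}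
    (hs : MeasurableSet s) (hf' : ∀ x ∈ s, HasFDerivWithinAt f (f' x) s x) (hf : InjOn f s) :
    ∫ x in s, |(f' x).det| ∂μ = μ.real (f '' s) := by
  simpa using (integral_image_eq_integral_abs_det_fderiv_smul μ hs hf' hf fun _ => (1 : ℝ)).symm

lemma norm_sub_le_integral_norm_fderiv_apply_one {E : Type*} [NormedAddCommGroup E]
    [NormedSpace ℝ E] {f : ℂ → E} {f' : ℂ → ℂ →L[ℝ] E} {S : Set ℂ} {x₀ x₁ y : ℝ}
    (hx : x₀ ≤ x₁) (hseg : ∀ x ∈ Icc x₀ x₁, (x + y * I : ℂ) ∈ S)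
    (hf : ∀ z ∈ S, HasFDerivWithinAt f (f' z) S z) (hf' : ContinuousOn f' S) :
    ‖f (x₁ + y * I) - f (x₀ + y * I)‖ ≤ ∫ x in x₀..x₁, ‖f' (x + y * I) 1‖ := by
  have hline : Continuous fun x : ℝ => (x + y * I : ℂ) := by fun_prop
  have hφ : ∀ x ∈ Icc x₀ x₁, HasDerivWithinAt (fun x : ℝ => f (x + y * I)) (f' (x + y * I) 1)
      (Icc x₀ x₁) x := fun x hx =>
    (hf _ (hseg x hx)).comp_hasDerivWithinAt x
      (((hasDerivAt_id x).ofReal_comp.add_const _).hasDerivWithinAt.congr_deriv (by simp)) hseg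
  have hφ_int : ∀ x ∈ Ioo x₀ x₁,
      HasDerivAt (fun x : ℝ => f (x + y * I)) (f' (x + y * I) 1) x := fun x hx =>
    (hφ x (Ioo_subset_Icc_self hx)).hasDerivAt (Icc_mem_nhds hx.1 hx.2)
  refine norm_sub_le_integral_of_norm_deriv_le_of_le hx (fun x hx => (hφ x hx).continuousWithinAt)
    (fun x hx => (hφ_int x hx).differentiableAt.differentiableWithinAt)
    (.of_forall fun x hx => (congrArg norm (hφ_int x hx).deriv).le) ?_
  refine ContinuousOn.intervalIntegrable ?_
  rw [uIcc_of_le hx]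
  exact ((ContinuousLinearMap.apply ℝ E (1 : ℂ)).continuous.comp_continuousOn
    (hf'.comp hline.continuousOn hseg)).norm

section Rectangle

variable {f : ℂ → ℂ} {f' : ℂ → ℂ →L[ℝ] ℂ} {x₀ x₁ y₀ y₁ c₀ c₁ : ℝ}

lemma mul_le_setIntegral_norm_fderiv_apply_one (hx : x₀ ≤ x₁) (hy : y₀ ≤ y₁)
    (hf : ∀ z ∈ Icc x₀ x₁ ×ℂ Icc y₀ y₁, HasFDerivWithinAt f (f' z) (Icc x₀ x₁ ×ℂ Icc y₀ y₁) z)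
    (hf' : ContinuousOn f' (Icc x₀ x₁ ×ℂ Icc y₀ y₁))
    (hleft : ∀ z ∈ Icc x₀ x₁ ×ℂ Icc y₀ y₁, z.re = x₀ → (f z).re = c₀)
    (hright : ∀ z ∈ Icc x₀ x₁ ×ℂ Icc y₀ y₁, z.re = x₁ → (f z).re = c₁) :
    (c₁ - c₀) * (y₁ - y₀) ≤ ∫ z in Icc x₀ x₁ ×ℂ Icc y₀ y₁, ‖f' z 1‖ := by
  set R := Icc x₀ x₁ ×ℂ Icc y₀ y₁
  have hseg : ∀ y ∈ Icc y₀ y₁, ∀ x ∈ Icc x₀ x₁, (x + y * I : ℂ) ∈ R := fun y hy x hx => by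
    simpa [R, mem_reProdIm] using ⟨hx, hy⟩
  have hint : IntegrableOn (fun z => ‖f' z 1‖) R :=
    ((ContinuousLinearMap.apply ℝ ℂ (1 : ℂ)).continuous.comp_continuousOn hf').norm
      |>.integrableOn_compact (isCompact_Icc.reProdIm isCompact_Icc)
  have hslice : ∀ y ∈ Icc y₀ y₁, c₁ - c₀ ≤ ∫ x in Icc x₀ x₁, ‖f' (x + y * I) 1‖ := by
    intro y hy
    have hl := hleft _ (hseg y hy x₀ (left_mem_Icc.2 hx)) (by simp)
    have hr := hright _ (hseg y hy x₁ (right_mem_Icc.2 hx)) (by simp)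
    calc c₁ - c₀ = (f (x₁ + y * I) - f (x₀ + y * I)).re := by rw [sub_re, hl, hr]
      _ ≤ ‖f (x₁ + y * I) - f (x₀ + y * I)‖ := re_le_norm _
      _ ≤ ∫ x in x₀..x₁, ‖f' (x + y * I) 1‖ :=
        norm_sub_le_integral_norm_fderiv_apply_one hx (hseg y hy) hf hf'
      _ = ∫ x in Icc x₀ x₁, ‖f' (x + y * I) 1‖ := by
        rw [intervalIntegral.integral_of_le hx, integral_Icc_eq_integral_Ioc]
  calc (c₁ - c₀) * (y₁ - y₀) = ∫ _ in Icc y₀ y₁, c₁ - c₀ := by simp [hy, mul_comm]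
    _ ≤ ∫ y in Icc y₀ y₁, ∫ x in Icc x₀ x₁, ‖f' (x + y * I) 1‖ :=
      setIntegral_mono_on (integrable_const _)
        (integrableOn_setIntegral_of_integrableOn_reProdIm hint) measurableSet_Icc hslice
    _ = ∫ z in R, ‖f' z 1‖ := (setIntegral_reProdIm hint).symm

lemma sq_mul_le_mul_measureReal_image {K : ℝ} (hx : x₀ ≤ x₁) (hy : y₀ ≤ y₁) (hc : c₀ ≤ c₁)
    (hf : ∀ z ∈ Icc x₀ x₁ ×ℂ Icc y₀ y₁, HasFDerivWithinAt f (f' z) (Icc x₀ x₁ ×ℂ Icc y₀ y₁) z)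
    (hf' : ContinuousOn f' (Icc x₀ x₁ ×ℂ Icc y₀ y₁)) (hinj : InjOn f (Icc x₀ x₁ ×ℂ Icc y₀ y₁))
    (hK : ∀ z ∈ Icc x₀ x₁ ×ℂ Icc y₀ y₁, ‖f' z 1‖ ^ 2 ≤ K * |(f' z).det|)
    (hleft : ∀ z ∈ Icc x₀ x₁ ×ℂ Icc y₀ y₁, z.re = x₀ → (f z).re = c₀)
    (hright : ∀ z ∈ Icc x₀ x₁ ×ℂ Icc y₀ y₁, z.re = x₁ → (f z).re = c₁) :
    ((c₁ - c₀) * (y₁ - y₀)) ^ 2 ≤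
      (x₁ - x₀) * (y₁ - y₀) * (K * volume.real (f '' (Icc x₀ x₁ ×ℂ Icc y₀ y₁))) := by
  set R := Icc x₀ x₁ ×ℂ Icc y₀ y₁
  have hR : IsCompact R := isCompact_Icc.reProdIm isCompact_Icc
  have hdx : ContinuousOn (fun z => ‖f' z 1‖) R :=
    ((ContinuousLinearMap.apply ℝ ℂ (1 : ℂ)).continuous.comp_continuousOn hf').norm
  have hdet : ContinuousOn (fun z => |(f' z).det|) R :=
    (ContinuousLinearMap.continuous_det.comp_continuousOn hf').abs
  have hlength := mul_le_setIntegral_norm_fderiv_apply_one hx hy hf hf' hleft hright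
  calc ((c₁ - c₀) * (y₁ - y₀)) ^ 2 ≤ (∫ z in R, ‖f' z 1‖) ^ 2 := by
        gcongr
    _ ≤ volume.real R * ∫ z in R, ‖f' z 1‖ ^ 2 :=
        sq_setIntegral_le_measureReal_mul_setIntegral_sq (hR.measure_ne_top (μ := volume))
          (hdx.integrableOn_compact hR) ((hdx.pow 2).integrableOn_compact hR)
    _ ≤ volume.real R * ∫ z in R, K * |(f' z).det| :=
        mul_le_mul_of_nonneg_left (setIntegral_mono_on ((hdx.pow 2).integrableOn_compact hR)
          ((hdet.integrableOn_compact hR).const_mul K) hR.isClosed.measurableSet hK)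
          measureReal_nonneg
    _ = (x₁ - x₀) * (y₁ - y₀) * (K * volume.real (f '' R)) := by
        rw [integral_const_mul, measureReal_reProdIm_Icc hx hy,
          integral_abs_det_fderiv_eq_measureReal_image volume hR.isClosed.measurableSet hf hinj]

end Rectangle

theorem stmt5_general (a b a' b' K : ℝ) (ha : 0 < a) (hb : 0 < b) (ha' : 0 < a') (hb' : 0 < b')
    (f : ℂ → ℂ)
    (R : Set ℂ) (hR : R = {z : ℂ | z.re ∈ Set.Icc 0 a ∧ z.im ∈ Set.Icc 0 b})
    (R' : Set ℂ) (hR' : R' = {z : ℂ | z.re ∈ Set.Icc 0 a' ∧ z.im ∈ Set.Icc 0 b'})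
    (hC1 : ContDiffOn ℝ 1 f R)
    (hbij : Set.BijOn f R R')
    (hs1 : ∀ z ∈ R, z.re = 0 → (f z).re = 0)
    (hs2 : ∀ z ∈ R, z.re = a → (f z).re = a')
    (hdil : ∀ z ∈ R, ∃ D : ℂ ≃L[ℝ] ℂ,
      HasFDerivWithinAt f (D : ℂ →L[ℝ] ℂ) R z ∧
        ‖(D : ℂ →L[ℝ] ℂ)‖ * ‖(D.symm : ℂ →L[ℝ] ℂ)‖ ≤ K) :
    (a' / b') / (a / b) ≤ K := by
  obtain rfl : R = Icc 0 a ×ℂ Icc 0 b := hR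
  obtain rfl : R' = Icc 0 a' ×ℂ Icc 0 b' := hR'
  have hu := uniqueDiffOn_reProdIm_Icc ha hb
  set f' := fderivWithin ℝ f (Icc 0 a ×ℂ Icc 0 b)
  have hf' : ∀ z ∈ Icc 0 a ×ℂ Icc 0 b, HasFDerivWithinAt f (f' z) (Icc 0 a ×ℂ Icc 0 b) z :=
    fun z hz => (hC1.differentiableOn one_ne_zero z hz).hasFDerivWithinAt
  have hK : ∀ z ∈ Icc 0 a ×ℂ Icc 0 b, ‖f' z 1‖ ^ 2 ≤ K * |(f' z).det| := by
    intro z hz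
    obtain ⟨D, hD, hKD⟩ := hdil z hz
    rw [show f' z = D from hD.fderivWithin (hu z hz)]
    have h := D.sq_norm_apply_le 1
    rw [norm_one, one_pow, mul_one] at h
    exact h.trans (mul_le_mul_of_nonneg_right hKD (abs_nonneg _))
  have key := sq_mul_le_mul_measureReal_image ha.le hb.le ha'.le hf'
    (hC1.continuousOn_fderivWithin hu le_rfl) hbij.injOn hK hs1 hs2
  rw [hbij.image_eq, measureReal_reProdIm_Icc ha'.le hb'.le] at key
  simp only [sub_zero] at key
  calc (a' / b') / (a / b) = (a' * b) / (a * b') := by field_simp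
    _ ≤ K := by rw [div_le_iff₀ (by positivity)]; nlinarith [mul_pos ha' hb]

/-- Grötzsch's inequality: a C¹ side-respecting bijection between the rectangles
`[0,a]×[0,b]` and `[0,a']×[0,b']` whose dilatation quotient is everywhere `≤ K`
satisfies `(a'/b')/(a/b) ≤ K`. -/
theorem stmt5 (a b a' b' K : ℝ) (ha : 0 < a) (hb : 0 < b) (ha' : 0 < a') (hb' : 0 < b')
    (f : ℂ → ℂ)
    (R : Set ℂ) (hR : R = {z : ℂ | z.re ∈ Set.Icc 0 a ∧ z.im ∈ Set.Icc 0 b})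
    (R' : Set ℂ) (hR' : R' = {z : ℂ | z.re ∈ Set.Icc 0 a' ∧ z.im ∈ Set.Icc 0 b'})
    (hC1 : ContDiffOn ℝ 1 f R)
    (hbij : Set.BijOn f R R')
    (hs1 : ∀ z ∈ R, z.re = 0 → (f z).re = 0)
    (hs2 : ∀ z ∈ R, z.re = a → (f z).re = a')
    (hs3 : ∀ z ∈ R, z.im = 0 → (f z).im = 0)
    (hs4 : ∀ z ∈ R, z.im = b → (f z).im = b')
    (hdil : ∀ z ∈ R, ∃ D : ℂ ≃L[ℝ] ℂ,
      HasFDerivWithinAt f (D : ℂ →L[ℝ] ℂ) R z ∧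
        ‖(D : ℂ →L[ℝ] ℂ)‖ * ‖(D.symm : ℂ →L[ℝ] ℂ)‖ ≤ K) :
    (a' / b') / (a / b) ≤ K :=
  stmt5_general a b a' b' K ha hb ha' hb' f R hR R' hR' hC1 hbij hs1 hs2 hdil
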